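/- arXiv:1812.01961 — 2 statements merged into one kernel-verified Lean document; each statement's English description precedes it below -/
import Mathlib

section
/- Let G be a graph with n vertices and maximum degree at most d. For every nonempty subset U ⊆ V(G) and every natural number i, the ball B(U,i) of all vertices at distance at most i from U has size at least min(n/2, |U|·(1 + h(G)/d)^i). -/
open Finset
open scoped Classical

/-- Number of edges of `G` between disjoint sets `A` and `B`. -/
noncomputable def eBetween {V : Type*} (G : SimpleGraph V) (A B : Finset V) : ℕ :=
  ((A ×ˢ B).filter fun p => G.Adj p.1 p.2).card

/-- The Cheeger constant `h(G) = min{e(S, V\S)/|S| : 0 < |S| ≤ n/2}`. -/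
noncomputable def cheeger {V : Type*} [Fintype V] (G : SimpleGraph V) : ℝ :=
  sInf {x : ℝ | ∃ S : Finset V, S.Nonempty ∧ 2 * S.card ≤ Fintype.card V ∧
    x = (eBetween G S Sᶜ : ℝ) / S.card}

/-- `B(U,i)`: the set of vertices at distance at most `i` from some vertex of `U`. -/
noncomputable def ball {V : Type*} [Fintype V] (G : SimpleGraph V)
    (U : Finset V) (i : ℕ) : Finset V :=
  univ.filter fun v => ∃ u ∈ U, ∃ p : G.Walk u v, p.length ≤ i

/-!
While `B(U,i)` has at most `n/2` vertices, at least `h(G)·|B(U,i)|` edges leave it. Their outer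
ends lie in `B(U,i+1) \ B(U,i)`, and each vertex there is the outer end of at most `d` of them,
so `|B(U,i+1)| ≥ |B(U,i)|·(1 + h(G)/d)`. Iterating this until the ball exceeds `n/2` gives the
bound.
-/

section Ball

variable {V : Type*} [Fintype V] (G : SimpleGraph V) (U : Finset V)

lemma subset_ball (i : ℕ) : U ⊆ ball G U i := by
  intro v hv
  simp only [ball, mem_filter, mem_univ, true_and]
  exact ⟨v, hv, .nil, by simp⟩

lemma ball_mono {i j : ℕ} (hij : i ≤ j) : ball G U i ⊆ ball G U j := by
  intro v hv
  simp only [ball, mem_filter, mem_univ, true_and] at hv ⊢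
  obtain ⟨u, hu, p, hp⟩ := hv
  exact ⟨u, hu, p, hp.trans hij⟩

lemma mem_ball_succ_of_adj {i : ℕ} {a b : V} (ha : a ∈ ball G U i) (hab : G.Adj a b) :
    b ∈ ball G U (i + 1) := by
  simp only [ball, mem_filter, mem_univ, true_and] at ha ⊢
  obtain ⟨u, hu, p, hp⟩ := ha
  exact ⟨u, hu, p.concat hab, by rw [SimpleGraph.Walk.length_concat]; omega⟩

end Ball

lemma eBetween_le_mul_card {V : Type*} [Fintype V] (G : SimpleGraph V) {d : ℕ}
    (hdeg : ∀ v, G.degree v ≤ d) {A B T : Finset V}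
    (hT : ∀ a ∈ A, ∀ b ∈ B, G.Adj a b → b ∈ T) :
    eBetween G A B ≤ d * #T := by
  apply card_le_mul_card_image_of_maps_to (f := Prod.snd)
  · rintro ⟨a, b⟩ hab
    simp only [mem_filter, mem_product] at hab
    exact hT a hab.1.1 b hab.1.2 hab.2
  · intro b _
    calc #{p ∈ (A ×ˢ B).filter (fun p => G.Adj p.1 p.2) | p.2 = b}
        ≤ #(G.neighborFinset b) := by
          apply card_le_card_of_injOn Prod.fst
          · rintro ⟨a, b'⟩ hp
            simp only [mem_coe, mem_filter, mem_product] at hp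
            simpa [hp.2] using hp.1.2.symm
          · rintro ⟨a, b₁⟩ hp₁ ⟨a', b₂⟩ hp₂ (rfl : a = a')
            simp only [mem_coe, mem_filter] at hp₁ hp₂
            rw [hp₁.2, hp₂.2]
      _ ≤ d := hdeg b

section Cheeger

variable {V : Type*} [Fintype V] (G : SimpleGraph V)

lemma cheeger_nonneg : 0 ≤ cheeger G := by
  apply Real.sInf_nonneg
  rintro x ⟨S, -, -, rfl⟩
  positivity

lemma cheeger_mul_card_le_eBetween {S : Finset V} (hS : 2 * #S ≤ Fintype.card V) :
    cheeger G * #S ≤ eBetween G S Sᶜ := by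
  rcases S.eq_empty_or_nonempty with rfl | hne
  · simp
  have hle : cheeger G ≤ (eBetween G S Sᶜ : ℝ) / #S := by
    apply csInf_le
    · exact ⟨0, by rintro x ⟨T, -, -, rfl⟩; positivity⟩
    · exact ⟨S, hne, hS, rfl⟩
  rwa [le_div_iff₀ (by exact_mod_cast hne.card_pos)] at hle

end Cheeger

lemma card_ball_mul_le_card_ball_succ {V : Type*} [Fintype V] (G : SimpleGraph V) {d : ℕ}
    (hdeg : ∀ v, G.degree v ≤ d) (U : Finset V) {i : ℕ}
    (hsmall : 2 * #(ball G U i) ≤ Fintype.card V) :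
    (#(ball G U i) : ℝ) * (1 + cheeger G / d) ≤ #(ball G U (i + 1)) := by
  set S := ball G U i
  set T := ball G U (i + 1) \ S
  have hgrowth : (#S : ℝ) * (cheeger G / d) ≤ #T := by
    rcases d.eq_zero_or_pos with rfl | hd
    · simp
    have hedges : eBetween G S Sᶜ ≤ d * #T :=
      eBetween_le_mul_card G hdeg fun a ha b hb hab =>
        mem_sdiff.2 ⟨mem_ball_succ_of_adj G U ha hab, mem_compl.1 hb⟩
    rw [mul_div_assoc', div_le_iff₀ (by exact_mod_cast hd), mul_comm (#S : ℝ)]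
    calc cheeger G * #S ≤ eBetween G S Sᶜ := cheeger_mul_card_le_eBetween G hsmall
      _ ≤ d * #T := by exact_mod_cast hedges
      _ = #T * d := mul_comm _ _
  have hsplit : #T + #S = #(ball G U (i + 1)) :=
    card_sdiff_add_card_eq_card (ball_mono G U i.le_succ)
  rw [← hsplit]
  push_cast
  linarith

theorem stmt_2_general {V : Type*} [Fintype V] (G : SimpleGraph V) (d : ℕ)
    (hdeg : ∀ v : V, G.degree v ≤ d) (U : Finset V) (i : ℕ) :
    min ((Fintype.card V : ℝ) / 2) ((U.card : ℝ) * (1 + cheeger G / d) ^ i) ≤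
      ((ball G U i).card : ℝ) := by
  have hrate : 0 ≤ 1 + cheeger G / d :=
    add_nonneg zero_le_one (div_nonneg (cheeger_nonneg G) d.cast_nonneg)
  induction i with
  | zero => simpa using Or.inr (card_le_card (subset_ball G U 0))
  | succ i ih =>
    have hmono : (#(ball G U i) : ℝ) ≤ #(ball G U (i + 1)) := by
      exact_mod_cast card_le_card (ball_mono G U i.le_succ)
    rw [min_le_iff] at ih ⊢
    rcases ih with hhalf | hgrow
    · exact Or.inl (hhalf.trans hmono)
    by_cases hsmall : 2 * #(ball G U i) ≤ Fintype.card V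
    · right
      calc (#U : ℝ) * (1 + cheeger G / d) ^ (i + 1)
          = #U * (1 + cheeger G / d) ^ i * (1 + cheeger G / d) := by ring
        _ ≤ #(ball G U i) * (1 + cheeger G / d) := mul_le_mul_of_nonneg_right hgrow hrate
        _ ≤ #(ball G U (i + 1)) := card_ball_mul_le_card_ball_succ G hdeg U hsmall
    · left
      have : (Fintype.card V : ℝ) < 2 * #(ball G U i) := by exact_mod_cast not_le.1 hsmall
      linarith

/-- For a graph on `n` vertices with maximum degree at most `d`, every nonempty
`U` and every `i` satisfy `|B(U,i)| ≥ min(n/2, |U|(1 + h(G)/d)^i)`. -/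
theorem stmt_2 {V : Type*} [Fintype V] (G : SimpleGraph V) (d : ℕ) (hd : 0 < d)
    (hdeg : ∀ v : V, G.degree v ≤ d) (U : Finset V) (hU : U.Nonempty) (i : ℕ) :
    min ((Fintype.card V : ℝ) / 2) ((U.card : ℝ) * (1 + cheeger G / d) ^ i) ≤
      ((ball G U i).card : ℝ) :=
  stmt_2_general G d hdeg U i
end

section
/- The complete bipartite graph G = K_{m,n} with 0 < m ≤ n has Cheeger constant h(G) ≥ m/2: every subset S of vertices with 0 < |S| ≤ (m+n)/2 satisfies e(S, V\S) ≥ (m/2)·|S|. -/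
open Finset
open scoped Classical

lemma filter_isLeft_card {α β : Type*} [DecidableEq α] [DecidableEq β]
    (S : Finset (α ⊕ β)) :
    (S.filter (fun x => (x.isLeft : Prop))).card = S.toLeft.card := by
  rw [show S.filter (fun x => (x.isLeft : Prop)) =
      S.toLeft.map ⟨Sum.inl, Sum.inl_injective⟩ by
    ext x
    cases x <;> simp]
  simp

lemma filter_isRight_card {α β : Type*} [DecidableEq α] [DecidableEq β]
    (S : Finset (α ⊕ β)) :
    (S.filter (fun x => (x.isRight : Prop))).card = S.toRight.card := by
  rw [show S.filter (fun x => (x.isRight : Prop)) =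
      S.toRight.map ⟨Sum.inr, Sum.inr_injective⟩ by
    ext x
    cases x <;> simp]
  simp

lemma eBetween_completeBipartite {α β : Type*} [DecidableEq α] [DecidableEq β]
    (S T : Finset (α ⊕ β)) :
    eBetween (completeBipartiteGraph α β) S T =
      S.toLeft.card * T.toRight.card + S.toRight.card * T.toLeft.card := by
  classical
  unfold eBetween
  have key : ((S ×ˢ T).filter fun p => (completeBipartiteGraph α β).Adj p.1 p.2) =
      (S.filter (fun x => (x.isLeft : Prop)) ×ˢ T.filter (fun x => (x.isRight : Prop))) ∪
      (S.filter (fun x => (x.isRight : Prop)) ×ˢ T.filter (fun x => (x.isLeft : Prop))) := by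
    ext ⟨x, y⟩
    cases x <;> cases y <;>
      simp [Finset.mem_product]
  rw [key, Finset.card_union_of_disjoint, Finset.card_product, Finset.card_product,
    filter_isLeft_card, filter_isRight_card, filter_isLeft_card, filter_isRight_card]
  · rw [Finset.disjoint_left]
    rintro ⟨x, y⟩ h1 h2
    rw [Finset.mem_product] at h1 h2
    simp only [Finset.mem_filter] at h1 h2
    cases x with
    | inl x => simp at h2
    | inr x => simp at h1

lemma toLeft_compl {α β : Type*} [Fintype α] [Fintype β] [DecidableEq α] [DecidableEq β]
    (S : Finset (α ⊕ β)) : Sᶜ.toLeft = S.toLeftᶜ := by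
  ext x; simp

lemma toRight_compl {α β : Type*} [Fintype α] [Fintype β] [DecidableEq α] [DecidableEq β]
    (S : Finset (α ⊕ β)) : Sᶜ.toRight = S.toRightᶜ := by
  ext x; simp

/-- The complete bipartite graph `K_{m,n}` with `0 < m ≤ n` has Cheeger constant at
least `m/2`: every `S` with `0 < |S| ≤ (m+n)/2` satisfies `e(S, V\S) ≥ (m/2)|S|`. -/
theorem stmt_10 (m n : ℕ) (hm : 0 < m) (hmn : m ≤ n) :
    ∀ S : Finset (Fin m ⊕ Fin n), S.Nonempty → 2 * S.card ≤ m + n →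
      ((m : ℝ) / 2) * S.card ≤
        (eBetween (completeBipartiteGraph (Fin m) (Fin n)) S Sᶜ : ℝ) := by
  intro S _hS hcard
  set a := S.toLeft.card with ha
  set b := S.toRight.card with hb
  have hab : a + b = S.card := Finset.card_toLeft_add_card_toRight
  have ham : a ≤ m := by
    simpa using (Finset.card_le_univ S.toLeft)
  have hbn : b ≤ n := by
    simpa using (Finset.card_le_univ S.toRight)
  have hE : eBetween (completeBipartiteGraph (Fin m) (Fin n)) S Sᶜ =
      a * (n - b) + b * (m - a) := by
    rw [eBetween_completeBipartite, toLeft_compl, toRight_compl,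
      Finset.card_compl, Finset.card_compl]
    simp [ha, hb]
  rw [hE]
  push_cast [Nat.cast_sub hbn, Nat.cast_sub ham]
  have hSc : ((S.card : ℕ) : ℝ) = a + b := by exact_mod_cast hab.symm
  rw [hSc]
  have h2' : 2 * (a + b) ≤ m + n := by rw [hab]; exact hcard
  have h2 : 2 * ((a : ℝ) + b) ≤ m + n := by exact_mod_cast h2' 
  have ham' : (a : ℝ) ≤ m := by exact_mod_cast ham
  have hbn' : (b : ℝ) ≤ n := by exact_mod_cast hbn
  have hmn' : (m : ℝ) ≤ n := by exact_mod_cast hmn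
  have ha0 : (0 : ℝ) ≤ a := by positivity
  have hb0 : (0 : ℝ) ≤ b := by positivity
  have hm0 : (0 : ℝ) ≤ m := by positivity
  have hs0 : (0 : ℝ) ≤ m + n - 2 * a - 2 * b := by linarith
  rcases le_or_gt 0 (2 * (n : ℝ) - m - 4 * b) with h | h
  · nlinarith [mul_nonneg ha0 h, mul_nonneg hb0 hm0]
  · nlinarith [mul_nonneg hs0 (by linarith : (0 : ℝ) ≤ m + 4 * b - 2 * n),
      sq_nonneg (2 * (b : ℝ) - n), mul_nonneg hm0 (sub_nonneg.2 hmn')]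
end
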